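/- arXiv:2303.14532 — 6 statements merged into one kernel-verified Lean document; each statement's English description precedes it below -/
import Mathlib

section
/- Let p_1 = 3, p_2 = 5, p_3 = 7, p_4 = 11, … be the increasing enumeration of the odd prime numbers. For all natural numbers m ≥ 1 and k ≥ 1, Π_{n=1}^{m} p_n^{2k}/(p_n^{2k} − 1) > Σ_{n=0}^{m} 1/(2n+1)^{2k}. -/
/-!
Expanding each factor as a geometric series, `p ^ s / (p ^ s - 1) = ∑ₑ (p ^ e)⁻ˢ`, and multiplying
out (the Euler product) turns the left-hand side into `∑ n⁻ˢ` over all `n` whose prime factors are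
among `p₁, …, pₘ`. The `i`-th odd prime is at least `2i + 1`, so every odd prime `≤ 2m + 1` is one of
`p₁, …, pₘ` and every odd `n ≤ 2m + 1` occurs in that series; so does `3 (2m + 1)`, which makes the
inequality strict.
-/

open Finset

/-- The `n`-th odd prime (0-indexed): `oddPrime 0 = 3`, `oddPrime 1 = 5`, etc. -/
noncomputable def oddPrime (n : ℕ) : ℕ := Nat.nth (fun p => p.Prime ∧ p ≠ 2) n

lemma setOf_prime_ne_two_infinite : {p : ℕ | p.Prime ∧ p ≠ 2}.Infinite :=
  (Nat.infinite_setOfPred_prime.sdiff (Set.finite_singleton 2)).mono fun _ hp => hp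

lemma oddPrime_prime_and_ne_two (n : ℕ) : (oddPrime n).Prime ∧ oddPrime n ≠ 2 :=
  Nat.nth_mem_of_infinite setOf_prime_ne_two_infinite n

lemma oddPrime_strictMono : StrictMono oddPrime :=
  Nat.nth_strictMono setOf_prime_ne_two_infinite

lemma odd_oddPrime (n : ℕ) : Odd (oddPrime n) :=
  (oddPrime_prime_and_ne_two n).1.odd_of_ne_two (oddPrime_prime_and_ne_two n).2

lemma two_mul_add_three_le_oddPrime (n : ℕ) : 2 * n + 3 ≤ oddPrime n := by
  induction n with
  | zero =>
    obtain ⟨hp, h2⟩ := oddPrime_prime_and_ne_two 0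
    have := hp.two_le
    omega
  | succ n ih =>
    have := oddPrime_strictMono (Nat.lt_add_one n)
    obtain ⟨a, ha⟩ := odd_oddPrime (n + 1)
    omega

lemma exists_oddPrime_eq {p : ℕ} (hp : p.Prime) (h2 : p ≠ 2) : ∃ n, oddPrime n = p :=
  ⟨_, Nat.nth_count (p := fun p => p.Prime ∧ p ≠ 2) ⟨hp, h2⟩⟩

lemma odd_mem_factoredNumbers_image_oddPrime {m n : ℕ} (hn : Odd n) (hnm : n ≤ 2 * m + 1) :
    n ∈ Nat.factoredNumbers ((range m).image oddPrime) := by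
  refine Nat.mem_factoredNumbers'.mpr fun p hp hpn => ?_
  have h2 : p ≠ 2 := by
    rintro rfl
    exact Nat.not_even_iff_odd.mpr hn (even_iff_two_dvd.mpr hpn)
  obtain ⟨i, rfl⟩ := exists_oddPrime_eq hp h2
  have := Nat.le_of_dvd hn.pos hpn
  have := two_mul_add_three_le_oddPrime i
  exact mem_image_of_mem _ (mem_range.mpr (by omega))

lemma hasSum_inv_pow_factoredNumbers {s : ℕ} (hs : s ≠ 0) (S : Finset ℕ) :
    HasSum (fun n : Nat.factoredNumbers S => ((n : ℝ) ^ s)⁻¹)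
      (∏ p ∈ S with p.Prime, (p : ℝ) ^ s / ((p : ℝ) ^ s - 1)) := by
  let f : ℕ →* ℝ := invMonoidHom.comp ((powMonoidHom s).comp (Nat.castRingHom ℝ))
  have hf : ∀ {p : ℕ}, p.Prime → ‖f p‖ < 1 := fun {p} hp => by
    have : (1 : ℝ) < (p : ℝ) ^ s := one_lt_pow₀ (by exact_mod_cast hp.one_lt) hs
    simpa [f, abs_inv] using inv_lt_one_of_one_lt₀ this
  have hprod : ∏ p ∈ S with p.Prime, (p : ℝ) ^ s / ((p : ℝ) ^ s - 1)
      = ∏ p ∈ S with p.Prime, (1 - f p)⁻¹ := by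
    refine prod_congr rfl fun p hp => ?_
    have : (p : ℝ) ^ s ≠ 0 := pow_ne_zero _ (by exact_mod_cast (mem_filter.mp hp).2.ne_zero)
    simp only [MonoidHom.coe_comp, coe_invMonoidHom, MonoidHom.coe_coe, Nat.coe_castRingHom,
      Function.comp_apply, powMonoidHom_apply, f]
    field_simp
  rw [hprod]
  exact (EulerProduct.summable_and_hasSum_factoredNumbers_prod_filter_prime_geometric hf S).2

lemma sum_inv_pow_le_prod {s : ℕ} (hs : s ≠ 0) {S B : Finset ℕ}
    (hB : ∀ n ∈ B, n ∈ Nat.factoredNumbers S) :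
    ∑ n ∈ B, ((n : ℝ) ^ s)⁻¹ ≤ ∏ p ∈ S with p.Prime, (p : ℝ) ^ s / ((p : ℝ) ^ s - 1) := by
  set f : ℕ → ℝ := fun n => ((n : ℝ) ^ s)⁻¹
  have hsum : HasSum ((Nat.factoredNumbers S).indicator f) _ :=
    hasSum_subtype_iff_indicator.mp (hasSum_inv_pow_factoredNumbers hs S)
  calc ∑ n ∈ B, f n = ∑ n ∈ B, (Nat.factoredNumbers S).indicator f n :=
        sum_congr rfl fun n hn => (Set.indicator_of_mem (hB n hn) f).symm
    _ ≤ _ := sum_le_hasSum B (fun n _ => Set.indicator_nonneg (fun n _ => by positivity) n) hsum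

lemma sum_inv_pow_lt_prod {s : ℕ} (hs : s ≠ 0) {S B : Finset ℕ}
    (hB : ∀ n ∈ B, n ∈ Nat.factoredNumbers S) {a : ℕ} (ha : a ∈ Nat.factoredNumbers S)
    (haB : a ∉ B) :
    ∑ n ∈ B, ((n : ℝ) ^ s)⁻¹ < ∏ p ∈ S with p.Prime, (p : ℝ) ^ s / ((p : ℝ) ^ s - 1) := by
  have ha0 : (0 : ℝ) < ((a : ℝ) ^ s)⁻¹ := by
    have := Nat.ne_zero_of_mem_factoredNumbers ha
    positivity
  calc ∑ n ∈ B, ((n : ℝ) ^ s)⁻¹ < ((a : ℝ) ^ s)⁻¹ + ∑ n ∈ B, ((n : ℝ) ^ s)⁻¹ := by linarith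
    _ = ∑ n ∈ insert a B, ((n : ℝ) ^ s)⁻¹ := by rw [sum_insert haB]
    _ ≤ _ := sum_inv_pow_le_prod hs ((forall_mem_insert ..).mpr ⟨ha, hB⟩)

theorem odd_prime_product_gt_odd_sum (m k : ℕ) (hm : 1 ≤ m) (hk : 1 ≤ k) :
    ∏ n ∈ Finset.range m,
        ((oddPrime n : ℝ) ^ (2 * k) / ((oddPrime n : ℝ) ^ (2 * k) - 1))
    > ∑ n ∈ Finset.range (m + 1), (1 : ℝ) / ((2 * n + 1 : ℕ) : ℝ) ^ (2 * k) := by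
  set S := (range m).image oddPrime
  have hfactored {n : ℕ} (hn : Odd n) (hnm : n ≤ 2 * m + 1) : n ∈ Nat.factoredNumbers S :=
    odd_mem_factoredNumbers_image_oddPrime hn hnm
  have hodd : ∀ n ∈ (range (m + 1)).image (2 * · + 1), n ∈ Nat.factoredNumbers S := by
    simp only [mem_image, mem_range]
    rintro _ ⟨j, hj, rfl⟩
    exact hfactored (odd_two_mul_add_one j) (by omega)
  have hwitness : 3 * (2 * m + 1) ∈ Nat.factoredNumbers S :=
    Nat.mul_mem_factoredNumbers (hfactored (by decide) (by omega))
      (hfactored (odd_two_mul_add_one m) le_rfl)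
  have hprime : ∀ p ∈ S, p.Prime := by
    simp only [S, mem_image]
    rintro _ ⟨i, _, rfl⟩
    exact (oddPrime_prime_and_ne_two i).1
  have key := sum_inv_pow_lt_prod (by omega : 2 * k ≠ 0) hodd hwitness
    (by simp only [mem_image, mem_range, not_exists, not_and]; omega)
  rw [sum_image (fun a _ b _ h => by simpa using h), filter_true_of_mem hprime,
    prod_image oddPrime_strictMono.injective.injOn] at key
  simpa only [one_div] using key
end

section
/- For every real number a ≥ 3 and every natural number k ≥ 1, the strict inequality (2·(2k)!/(π^{2k}(2^{2k} − 1))) · a^{2k}/(a^{2k} − 1) < |B_{2k}| holds. -/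
/-!
Since `|B_{2k}| = 2 (2k)! ζ(2k) / (2π)^{2k}` and the odd part of `ζ(2k)` is
`λ(2k) = (1 - 2^{-2k}) ζ(2k)`, the claim says `a^{2k} / (a^{2k} - 1) < λ(2k)`.
For `a ≥ 3` the left side is at most `1 + 1/(3^{2k} - 1)`, while already the first three
terms of `λ(2k)` give `1 + 1/3^{2k} + 1/5^{2k}`; the two compare because
`5^{2k} + 3^{2k} ≤ 8^{2k} < 9^{2k}`.
-/

open Real

theorem hasSum_one_div_odd_nat_pow {p : ℕ} (hp : 1 < p) :
    HasSum (fun n : ℕ => 1 / (2 * n + 1 : ℝ) ^ p)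
      ((1 - ((2 : ℝ) ^ p)⁻¹) * ∑' n : ℕ, 1 / (n : ℝ) ^ p) := by
  set f : ℕ → ℝ := fun n => 1 / (n : ℝ) ^ p
  have hf : Summable f := Real.summable_one_div_nat_pow.mpr hp
  have heven : (fun n => f (2 * n)) = fun n => ((2 : ℝ) ^ p)⁻¹ * f n := by
    ext n; simp [f, mul_pow, mul_comm]
  have hodd : Summable fun n => f (2 * n + 1) :=
    hf.comp_injective (i := fun n => 2 * n + 1) fun m n h => by simp only at h; omega
  have hsplit := tsum_even_add_odd (heven ▸ hf.mul_left _) hodd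
  rw [heven, tsum_mul_left] at hsplit
  convert hodd.hasSum using 1
  · simp [f]
  · linear_combination -hsplit

theorem abs_bernoulli_two_mul {k : ℕ} (hk : k ≠ 0) :
    |(bernoulli (2 * k) : ℝ)| =
      2 * (2 * k).factorial / (2 * π) ^ (2 * k) * ∑' n : ℕ, 1 / (n : ℝ) ^ (2 * k) := by
  have hZ : 0 < ∑' n : ℕ, 1 / (n : ℝ) ^ (2 * k) :=
    (hasSum_zeta_nat hk).summable.tsum_pos (fun n => by positivity) 1 (by simp)
  have h := congrArg abs (hasSum_zeta_nat hk).tsum_eq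
  rw [abs_of_pos hZ] at h
  simp only [abs_div, abs_mul, abs_pow, abs_neg, abs_one, one_pow, one_mul, Nat.abs_cast,
    abs_of_pos pi_pos, abs_two] at h
  have h2 : (2 : ℝ) ^ (2 * k) = 2 * 2 ^ (2 * k - 1) := by rw [← pow_succ']; congr 1; omega
  rw [h, mul_pow, h2]
  field_simp

theorem abs_bernoulli_two_mul_eq_mul_tsum_odd {k : ℕ} (hk : k ≠ 0) :
    |(bernoulli (2 * k) : ℝ)| =
      2 * (2 * k).factorial / (π ^ (2 * k) * ((2 : ℝ) ^ (2 * k) - 1)) *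
        ∑' n : ℕ, 1 / (2 * n + 1 : ℝ) ^ (2 * k) := by
  rw [(hasSum_one_div_odd_nat_pow (by omega : 1 < 2 * k)).tsum_eq, abs_bernoulli_two_mul hk]
  have h2 : (2 : ℝ) ^ (2 * k) - 1 ≠ 0 :=
    (sub_pos.mpr (one_lt_pow₀ (by norm_num) (by omega))).ne'
  rw [mul_pow]
  field_simp

theorem one_div_three_pow_sub_one_lt {p : ℕ} (hp : p ≠ 0) :
    1 / ((3 : ℝ) ^ p - 1) < 1 / 3 ^ p + 1 / 5 ^ p := by
  have h : (5 : ℝ) ^ p + 3 ^ p < 9 ^ p :=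
    calc (5 : ℝ) ^ p + 3 ^ p ≤ (5 + 3) ^ p := pow_add_pow_le (by norm_num) (by norm_num) hp
      _ < 9 ^ p := pow_lt_pow_left₀ (by norm_num) (by norm_num) hp
  have h9 : (9 : ℝ) ^ p = 3 ^ p * 3 ^ p := by rw [← mul_pow]; norm_num
  have h3 : (1 : ℝ) < 3 ^ p := one_lt_pow₀ (by norm_num) hp
  rw [div_add_div _ _ (by positivity) (by positivity),
    div_lt_div_iff₀ (by linarith) (by positivity)]
  nlinarith

theorem one_add_one_div_three_pow_add_one_div_five_pow_le_tsum_odd {p : ℕ} (hp : 1 < p) :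
    1 + 1 / (3 : ℝ) ^ p + 1 / 5 ^ p ≤ ∑' n : ℕ, 1 / (2 * n + 1 : ℝ) ^ p := by
  have h := (hasSum_one_div_odd_nat_pow hp).summable.sum_le_tsum (Finset.range 3)
    (fun n _ => by positivity)
  norm_num [Finset.sum_range_succ] at h ⊢
  linarith

theorem div_sub_one_lt_tsum_one_div_odd_pow {p : ℕ} (hp : 1 < p) {A : ℝ} (hA : 3 ^ p ≤ A) :
    A / (A - 1) < ∑' n : ℕ, 1 / (2 * n + 1 : ℝ) ^ p := by
  have h3 : (1 : ℝ) < 3 ^ p := one_lt_pow₀ (by norm_num) (by omega)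
  have hA1 : A - 1 ≠ 0 := by linarith
  calc A / (A - 1) = 1 + 1 / (A - 1) := by field_simp; ring
    _ ≤ 1 + 1 / (3 ^ p - 1) := by gcongr
    _ < 1 + 1 / 3 ^ p + 1 / 5 ^ p := by linarith [one_div_three_pow_sub_one_lt (p := p) (by omega)]
    _ ≤ _ := one_add_one_div_three_pow_add_one_div_five_pow_le_tsum_odd hp

theorem bernoulli_lower_bound_of_three_le (a : ℝ) (ha : 3 ≤ a) (k : ℕ) (hk : 1 ≤ k) :
    (2 * (Nat.factorial (2 * k) : ℝ) / (Real.pi ^ (2 * k) * ((2 : ℝ) ^ (2 * k) - 1))) *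
      (a ^ (2 * k) / (a ^ (2 * k) - 1))
    < |(bernoulli (2 * k) : ℝ)| := by
  rw [abs_bernoulli_two_mul_eq_mul_tsum_odd (by omega)]
  have h2 : (1 : ℝ) < 2 ^ (2 * k) := one_lt_pow₀ (by norm_num) (by omega)
  refine mul_lt_mul_of_pos_left ?_ (div_pos (by positivity) (mul_pos (by positivity) (by linarith)))
  exact div_sub_one_lt_tsum_one_div_odd_pow (by omega) (pow_le_pow_left₀ (by norm_num) ha _)
end

section
/- For every natural number k ≥ 1, the strict inequality (2·(2k)!/(π^{2k}(2^{2k} − 1))) · 3^{2k}/(3^{2k} − 1) < |B_{2k}| holds. -/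
/-!
By Euler's formula `|B_{2k}| = 2 (2k)! / (2π)^{2k} · ζ(2k)`, the claim is equivalent to
`ζ(s) (1 - 2^{-s}) (1 - 3^{-s}) > 1` for `s = 2k`. Removing the multiples of `2` and then of `3`
from the series `ζ(s) = ∑ n^{-s}` leaves exactly this product as the sum over `n` coprime to `6`,
which contains the terms `1` and `5^{-s}`.
-/

open Real

theorem HasSum.sieve_multiples {α : Type*} [Ring α] [TopologicalSpace α] [IsTopologicalRing α]
    {f : ℕ → α} {S a : α} {c : ℕ} (hc : c ≠ 0) (hf : HasSum f S)
    (hfc : ∀ n, f (c * n) = a * f n) :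
    HasSum (fun n => if c ∣ n then 0 else f n) ((1 - a) * S) := by
  have hmultiples : HasSum (fun n => if c ∣ n then f n else 0) (a * S) := by
    refine ((mul_right_injective₀ hc).hasSum_iff ?_).mp ?_
    · rintro n hn
      rw [if_neg fun ⟨m, hm⟩ => hn ⟨m, hm.symm⟩]
    · simpa [Function.comp_def, hfc] using hf.mul_left a
  have hsplit :
      (fun n => f n - if c ∣ n then f n else 0) = fun n => if c ∣ n then 0 else f n := by
    funext n
    split_ifs <;> simp
  simpa only [hsplit, sub_mul, one_mul] using hf.sub hmultiples

lemma one_div_nat_pow_mul (s c n : ℕ) :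
    1 / ((c * n : ℕ) : ℝ) ^ s = (1 / (c : ℝ)) ^ s * (1 / (n : ℝ) ^ s) := by
  rw [Nat.cast_mul, mul_pow, one_div_pow, one_div_mul_one_div]

theorem one_lt_tsum_one_div_nat_pow_mul {s : ℕ} (hs : 1 < s) :
    1 < (∑' n : ℕ, 1 / (n : ℝ) ^ s) * (1 - (1 / 2 : ℝ) ^ s) * (1 - (1 / 3 : ℝ) ^ s) := by
  set Z := ∑' n : ℕ, 1 / (n : ℝ) ^ s
  have hZ : HasSum (fun n : ℕ => 1 / (n : ℝ) ^ s) Z :=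
    (Real.summable_one_div_nat_pow.mpr hs).hasSum
  have hodd : HasSum (fun n : ℕ => if 2 ∣ n then 0 else 1 / (n : ℝ) ^ s)
      ((1 - (1 / 2) ^ s) * Z) :=
    hZ.sieve_multiples two_ne_zero fun n => by exact_mod_cast one_div_nat_pow_mul s 2 n
  have hcoprime := hodd.sieve_multiples (c := 3) three_ne_zero fun n => by
    have hdvd : 2 ∣ 3 * n ↔ 2 ∣ n := Nat.Coprime.dvd_mul_left (by norm_num)
    simp only [hdvd]
    split_ifs
    · rw [mul_zero]
    · exact_mod_cast one_div_nat_pow_mul s 3 n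
  have h15 := sum_le_hasSum {1, 5} (fun n _ => by split_ifs <;> positivity) hcoprime
  norm_num at h15
  have h5 : (0 : ℝ) < (5 ^ s)⁻¹ := by positivity
  calc 1 < (1 - (1 / 3) ^ s) * ((1 - (1 / 2) ^ s) * Z) := by linarith
    _ = Z * (1 - (1 / 2) ^ s) * (1 - (1 / 3) ^ s) := by ring

theorem bernoulli_lower_bound_three (k : ℕ) (hk : 1 ≤ k) :
    (2 * (Nat.factorial (2 * k) : ℝ) / (Real.pi ^ (2 * k) * ((2 : ℝ) ^ (2 * k) - 1))) *
      ((3 : ℝ) ^ (2 * k) / ((3 : ℝ) ^ (2 * k) - 1))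
    < |(bernoulli (2 * k) : ℝ)| := by
  have h2 : (1 : ℝ) < 2 ^ (2 * k) := one_lt_pow₀ (by norm_num) (by omega)
  have h3 : (1 : ℝ) < 3 ^ (2 * k) := one_lt_pow₀ (by norm_num) (by omega)
  have hsieve := one_lt_tsum_one_div_nat_pow_mul (s := 2 * k) (by omega)
  rw [abs_bernoulli_two_mul (by omega), mul_pow]
  have hlhs : 2 * ((2 * k).factorial : ℝ) / (π ^ (2 * k) * ((2 : ℝ) ^ (2 * k) - 1)) *
      ((3 : ℝ) ^ (2 * k) / ((3 : ℝ) ^ (2 * k) - 1)) =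
      2 * (2 * k).factorial / (2 ^ (2 * k) * π ^ (2 * k)) /
        ((1 - (1 / 2 : ℝ) ^ (2 * k)) * (1 - (1 / 3) ^ (2 * k))) := by
    rw [one_div_pow, one_div_pow]
    field_simp [(sub_pos.mpr h2).ne', (sub_pos.mpr h3).ne']
  have hC : (0 : ℝ) < 2 * (2 * k).factorial / (2 ^ (2 * k) * π ^ (2 * k)) := by positivity
  have ha : (1 / 2 : ℝ) ^ (2 * k) < 1 := pow_lt_one₀ (by norm_num) (by norm_num) (by omega)
  have hb : (1 / 3 : ℝ) ^ (2 * k) < 1 := pow_lt_one₀ (by norm_num) (by norm_num) (by omega)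
  rw [hlhs, div_lt_iff₀ (mul_pos (sub_pos.mpr ha) (sub_pos.mpr hb))]
  linarith [mul_lt_mul_of_pos_left hsieve hC]
end

section
/- The constant β = 9(1 − 8/π²) is best possible in the upper bound for even-indexed Bernoulli numbers: if β is a real number with β < 9 such that |B_{2k}| < (2·(2k)!/(π^{2k}(2^{2k} − 1))) · 3^{2k}/(3^{2k} − β) for every natural number k ≥ 1, then β ≥ 9(1 − 8/π²). -/
/-! Only the case `k = 1` is needed: since `B₂ = 1/6`, the bound there reads
`1/6 < 12 / (π² (9 - β))`, i.e. `β > 9 - 72/π²`. -/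

open Real

lemma bernoulli_upper_bound_at_one (β : ℝ) :
    2 * ((2 * 1).factorial : ℝ) / (π ^ (2 * 1) * ((2 : ℝ) ^ (2 * 1) - 1)) *
        ((3 : ℝ) ^ (2 * 1) / ((3 : ℝ) ^ (2 * 1) - β)) = 12 / (π ^ 2 * (9 - β)) := by
  rw [div_mul_div_comm]
  norm_num
  rw [mul_right_comm, mul_comm _ (3 : ℝ), ← div_div]
  norm_num

theorem bernoulli_upper_bound_beta_best (β : ℝ) (hβ : β < 9)
    (h : ∀ k : ℕ, 1 ≤ k →
      |(bernoulli (2 * k) : ℝ)|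
      < (2 * (Nat.factorial (2 * k) : ℝ) / (Real.pi ^ (2 * k) * ((2 : ℝ) ^ (2 * k) - 1))) *
          ((3 : ℝ) ^ (2 * k) / ((3 : ℝ) ^ (2 * k) - β))) :
    9 * (1 - 8 / Real.pi ^ 2) ≤ β := by
  have hB₂ : |(bernoulli (2 * 1) : ℝ)| = 1 / 6 := by norm_num [bernoulli_two]
  have hk₁ : 1 / 6 < 12 / (π ^ 2 * (9 - β)) := by
    simpa only [hB₂, bernoulli_upper_bound_at_one] using h 1 le_rfl
  have hπ₂ : 0 < π ^ 2 := by positivity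
  have hprod : π ^ 2 * (9 - β) < 72 := by
    rw [lt_div_iff₀ (mul_pos hπ₂ (by linarith))] at hk₁
    linarith
  have h72 : 9 - 72 / π ^ 2 < β := by
    rw [sub_lt_comm, lt_div_iff₀ hπ₂]
    linarith
  calc 9 * (1 - 8 / π ^ 2) = 9 - 72 / π ^ 2 := by ring
    _ ≤ β := h72.le
end

section
/- The function h(x) = 3^x · [1 − 1/((1 − 2^{−x}) ζ(x))] is strictly decreasing on the interval [2, ∞). -/
/-!
Since `(1 - 2⁻ˣ) ζ(x) = ∑_{m odd} m⁻ˣ = 1 + 3⁻ˣ W(x)` with `W(x) = ∑_{n ≥ 0} (3 / (2n + 3))ˣ`,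
one has `1 / h(x) = 1 / W(x) + 3⁻ˣ`, so for `2 ≤ a < b` it suffices that
`(3⁻ᵃ - 3⁻ᵇ) W(a) W(b) < W(a) - W(b)`.
Bernoulli's inequality gives `qᵃ - qᵇ ≥ θ (3q)ᵃ (3⁻ᵃ - 3⁻ᵇ)` whenever `q 3^θ ≤ 1` and `0 ≤ θ ≤ 1`;
summed over the terms `q = 3/5, 3/7, …, 1/5` of `W`, this beats the bound
`W(b) ≤ W(a) ≤ 1 + (9/8) (3/5)^(a-2)` obtained by comparing the tail of `W(a)` with that of `W(2)`.
-/

open Real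

/-- The real Riemann zeta function, `ζ(x) = ∑_{n=1}^∞ 1/n^x`. -/
noncomputable def zetaR (x : ℝ) : ℝ := ∑' n : ℕ, 1 / ((n : ℝ) + 1) ^ x

/-- `h(x) = 3^x · (1 − 1/((1 − 2^{−x}) ζ(x)))`. -/
noncomputable def h (x : ℝ) : ℝ := (3 : ℝ) ^ x * (1 - 1 / ((1 - (2 : ℝ) ^ (-x)) * zetaR x))

noncomputable def scaledOddTail (x : ℝ) : ℝ := ∑' n : ℕ, (3 / (2 * n + 3 : ℝ)) ^ x

lemma summable_one_div_rpow_of_le {g : ℕ → ℝ} (hg : ∀ n : ℕ, (n : ℝ) + 1 ≤ g n) {x : ℝ}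
    (hx : 1 < x) : Summable fun n : ℕ ↦ 1 / g n ^ x := by
  have hsucc : Summable fun n : ℕ ↦ 1 / ((n : ℝ) + 1) ^ x := by
    simpa using (summable_nat_add_iff 1).2 (summable_one_div_nat_rpow.2 hx)
  refine hsucc.of_nonneg_of_le (fun n ↦ ?_) (fun n ↦ ?_)
  · have : 0 < g n := by linarith [hg n, (n.cast_nonneg : (0 : ℝ) ≤ n)]
    positivity
  · gcongr
    exact hg n

lemma summable_scaledOddTail {x : ℝ} (hx : 1 < x) :
    Summable fun n : ℕ ↦ (3 / (2 * n + 3 : ℝ)) ^ x := by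
  refine ((summable_one_div_rpow_of_le (g := fun n ↦ 2 * n + 3) (fun n ↦ ?_) hx).mul_left
    ((3 : ℝ) ^ x)).congr fun n ↦ ?_
  · linarith [(n.cast_nonneg : (0 : ℝ) ≤ n)]
  · rw [div_rpow (by norm_num) (by positivity)]
    ring

lemma one_sub_two_rpow_neg_mul_zetaR {x : ℝ} (hx : 1 < x) :
    (1 - 2 ^ (-x)) * zetaR x = 1 + 3 ^ (-x) * scaledOddTail x := by
  set f : ℕ → ℝ := fun n ↦ 1 / ((n : ℝ) + 1) ^ x
  have heven : Summable fun k ↦ f (2 * k) :=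
    (summable_one_div_rpow_of_le (g := fun n ↦ 2 * n + 1)
      (fun n ↦ by linarith [(n.cast_nonneg : (0 : ℝ) ≤ n)]) hx).congr fun n ↦ by simp [f]
  have hodd : Summable fun k ↦ f (2 * k + 1) :=
    (summable_one_div_rpow_of_le (g := fun n ↦ 2 * n + 2)
      (fun n ↦ by linarith [(n.cast_nonneg : (0 : ℝ) ≤ n)]) hx).congr fun n ↦ by simp [f]; ring_nf
  have hsum_odd : ∑' k, f (2 * k + 1) = 2 ^ (-x) * zetaR x := by
    rw [zetaR, ← tsum_mul_left]
    congr 1 with k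
    dsimp only [f]
    rw [show ((2 * k + 1 : ℕ) : ℝ) + 1 = 2 * (k + 1) by push_cast; ring,
      mul_rpow (by norm_num) (by positivity), rpow_neg (by norm_num)]
    field_simp
  have hsum_even : ∑' k, f (2 * k) = 1 + 3 ^ (-x) * scaledOddTail x := by
    rw [heven.tsum_eq_zero_add, scaledOddTail, ← tsum_mul_left]
    congr 1
    · simp [f]
    · congr 1 with n
      dsimp only [f]
      rw [show ((2 * (n + 1) : ℕ) : ℝ) + 1 = 2 * n + 3 by push_cast; ring,
        div_rpow (by norm_num) (by positivity), rpow_neg (by norm_num)]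
      field_simp
  have hsplit := tsum_even_add_odd heven hodd
  rw [hsum_even, hsum_odd] at hsplit
  change _ = zetaR x at hsplit
  linear_combination -hsplit

lemma h_eq_scaledOddTail {x : ℝ} (hx : 1 < x) :
    h x = scaledOddTail x / (1 + 3 ^ (-x) * scaledOddTail x) := by
  have hW : 0 ≤ scaledOddTail x := tsum_nonneg fun n ↦ by positivity
  have h3 : (3 : ℝ) ^ (-x) * 3 ^ x = 1 := by rw [← rpow_add (by norm_num)]; simp
  have hpos : 0 < 1 + 3 ^ (-x) * scaledOddTail x := by positivity
  rw [h, one_sub_two_rpow_neg_mul_zetaR hx]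
  field_simp
  linear_combination scaledOddTail x * h3

lemma mul_rpow_mul_sub_le_rpow_sub_rpow {c q θ a b : ℝ} (hc : 1 ≤ c) (hq : 0 < q)
    (hθ₀ : 0 ≤ θ) (hθ₁ : θ ≤ 1) (hqc : q * c ^ θ ≤ 1) (hab : a ≤ b) :
    θ * (c * q) ^ a * (c ^ (-a) - c ^ (-b)) ≤ q ^ a - q ^ b := by
  have hc₀ : 0 < c := by linarith
  set s := c ^ (-(b - a))
  have hs₀ : 0 < s := by positivity
  have hs₁ : s ≤ 1 := rpow_le_one_of_one_le_of_nonpos hc (by linarith)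
  have hq_le : q ≤ c ^ (-θ) := by
    rw [rpow_neg hc₀.le, ← one_div, le_div_iff₀ (by positivity)]
    exact hqc
  have hpow_le : q ^ (b - a) ≤ s ^ θ := calc
    q ^ (b - a) ≤ (c ^ (-θ)) ^ (b - a) := by gcongr
    _ = s ^ θ := by rw [← rpow_mul hc₀.le, ← rpow_mul hc₀.le]; ring_nf
  have hbernoulli : s ^ θ ≤ 1 + θ * (s - 1) := by
    simpa using rpow_one_add_le_one_add_mul_self (s := s - 1) (by linarith) hθ₀ hθ₁
  have hb : q ^ b = q ^ a * q ^ (b - a) := by rw [← rpow_add hq]; ring_nf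
  have hcq : (c * q) ^ a * c ^ (-a) = q ^ a := by
    rw [mul_rpow hc₀.le hq.le, rpow_neg hc₀.le]
    field_simp
  have hcb : c ^ (-b) = c ^ (-a) * s := by rw [← rpow_add hc₀]; ring_nf
  have hqa : 0 < q ^ a := by positivity
  calc θ * (c * q) ^ a * (c ^ (-a) - c ^ (-b)) = θ * (1 - s) * q ^ a := by
        rw [hcb, ← hcq]; ring
    _ ≤ (1 - q ^ (b - a)) * q ^ a := by gcongr; linarith
    _ = q ^ a - q ^ b := by rw [hb]; ring

lemma rpow_div_natCast_le_of_pow_le {x y : ℝ} {p r : ℕ} (hx : 0 ≤ x) (hy : 0 ≤ y) (hr : r ≠ 0)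
    (h : x ^ p ≤ y ^ r) : x ^ ((p : ℝ) / r) ≤ y := by
  refine le_of_pow_le_pow_left₀ hr hy ?_
  rwa [← rpow_natCast, ← rpow_mul hx, div_mul_cancel₀ _ (by exact_mod_cast hr), rpow_natCast]

lemma three_rpow_le_five_div_three : (3 : ℝ) ^ (23 / 50 : ℝ) ≤ 5 / 3 := by
  exact_mod_cast rpow_div_natCast_le_of_pow_le (p := 23) (r := 50) (by norm_num) (by norm_num)
    (by norm_num) (by norm_num)

lemma three_rpow_le_seven_div_three : (3 : ℝ) ^ (77 / 100 : ℝ) ≤ 7 / 3 := by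
  exact_mod_cast rpow_div_natCast_le_of_pow_le (p := 77) (r := 100) (by norm_num) (by norm_num)
    (by norm_num) (by norm_num)

lemma rpow_eq_sq_mul_rpow_sub_two {r a : ℝ} (hr : 0 ≤ r) (ha : 2 ≤ a) :
    r ^ a = r ^ 2 * r ^ (a - 2) := by
  rw [← rpow_two, ← rpow_add' hr (by linarith)]
  ring_nf

lemma sq_mul_rpow_sub_two_le_rpow {c r a : ℝ} (hc : 0 ≤ c) (hcr : c ≤ r) (ha : 2 ≤ a) :
    r ^ 2 * c ^ (a - 2) ≤ r ^ a := by
  rw [rpow_eq_sq_mul_rpow_sub_two (hc.trans hcr) ha]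
  gcongr

lemma rpow_le_sq_mul_rpow_sub_two {c r a : ℝ} (hr : 0 ≤ r) (hrc : r ≤ c) (ha : 2 ≤ a) :
    r ^ a ≤ r ^ 2 * c ^ (a - 2) := by
  rw [rpow_eq_sq_mul_rpow_sub_two hr ha]
  gcongr

lemma tsum_three_div_two_mul_add_five_sq_le : ∑' n : ℕ, (3 / (2 * n + 5 : ℝ)) ^ 2 ≤ 9 / 8 := by
  refine Real.tsum_le_of_sum_range_le (fun n ↦ by positivity) fun N ↦ ?_
  have hterm (n : ℕ) :
      (3 / (2 * n + 5 : ℝ)) ^ 2 ≤ 9 / 4 * (1 / (n + 2) - 1 / ((n + 1 : ℕ) + 2)) := by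
    push_cast
    rw [div_pow, div_sub_div _ _ (by positivity) (by positivity), ← mul_div_assoc,
      div_le_div_iff₀ (by positivity) (by positivity)]
    nlinarith [(n.cast_nonneg : (0 : ℝ) ≤ n)]
  calc ∑ n ∈ Finset.range N, (3 / (2 * n + 5 : ℝ)) ^ 2
      ≤ ∑ n ∈ Finset.range N, 9 / 4 * (1 / (n + 2) - 1 / ((n + 1 : ℕ) + 2) : ℝ) :=
        Finset.sum_le_sum fun n _ ↦ hterm n
    _ = 9 / 4 * (1 / 2 - 1 / (N + 2)) := by
        rw [← Finset.mul_sum, Finset.sum_range_sub' (fun n : ℕ ↦ 1 / ((n : ℝ) + 2))]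
        norm_num
    _ ≤ 9 / 8 := by
        have : (0 : ℝ) ≤ 1 / (N + 2) := by positivity
        linarith

lemma scaledOddTail_le {a : ℝ} (ha : 2 ≤ a) : scaledOddTail a ≤ 1 + 9 / 8 * (3 / 5) ^ (a - 2) := by
  have hsummable {x : ℝ} (hx : 1 < x) : Summable fun n : ℕ ↦ (3 / (2 * n + 5 : ℝ)) ^ x := by
    refine ((summable_nat_add_iff 1).2 (summable_scaledOddTail hx)).congr fun n ↦ ?_
    push_cast
    ring_nf
  have hsq : Summable fun n : ℕ ↦ (3 / (2 * n + 5 : ℝ)) ^ 2 := by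
    simpa using hsummable one_lt_two
  have hterm (n : ℕ) :
      (3 / (2 * n + 5 : ℝ)) ^ a ≤ (3 / (2 * n + 5 : ℝ)) ^ 2 * (3 / 5) ^ (a - 2) :=
    rpow_le_sq_mul_rpow_sub_two (by positivity) (div_le_div_of_nonneg_left (by norm_num)
      (by norm_num) (by linarith [(n.cast_nonneg : (0 : ℝ) ≤ n)])) ha
  calc scaledOddTail a = 1 + ∑' n : ℕ, (3 / (2 * n + 5 : ℝ)) ^ a := by
        rw [scaledOddTail, (summable_scaledOddTail (by linarith)).tsum_eq_zero_add]
        norm_num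
        congr with n
        ring_nf
    _ ≤ 1 + ∑' n : ℕ, (3 / (2 * n + 5 : ℝ)) ^ 2 * (3 / 5) ^ (a - 2) :=
        add_le_add_right ((hsummable (by linarith)).tsum_le_tsum hterm (hsq.mul_right _)) 1
    _ = 1 + (∑' n : ℕ, (3 / (2 * n + 5 : ℝ)) ^ 2) * (3 / 5) ^ (a - 2) := by rw [tsum_mul_right]
    _ ≤ 1 + 9 / 8 * (3 / 5) ^ (a - 2) := by gcongr; exact tsum_three_div_two_mul_add_five_sq_le

lemma one_le_scaledOddTail {x : ℝ} (hx : 1 < x) : 1 ≤ scaledOddTail x := by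
  simpa [scaledOddTail] using (summable_scaledOddTail hx).le_tsum 0 fun n _ ↦ by positivity

lemma sum_range_le_scaledOddTail_sub {a b : ℝ} (ha : 1 < a) (hab : a ≤ b) (N : ℕ) :
    ∑ n ∈ Finset.range N, ((3 / (2 * n + 3 : ℝ)) ^ a - (3 / (2 * n + 3 : ℝ)) ^ b) ≤
      scaledOddTail a - scaledOddTail b := by
  have hb : 1 < b := ha.trans_le hab
  rw [scaledOddTail, scaledOddTail,
    ← (summable_scaledOddTail ha).tsum_sub (summable_scaledOddTail hb)]
  exact ((summable_scaledOddTail ha).sub (summable_scaledOddTail hb)).sum_le_tsum _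
    fun n _ ↦ sub_nonneg.2 <| rpow_le_rpow_of_exponent_ge (by positivity)
      (div_le_one_of_le₀ (by linarith [(n.cast_nonneg : (0 : ℝ) ≤ n)]) (by positivity)) hab

lemma rpow_neg_sub_mul_le_scaledOddTail_sub {a b : ℝ} (ha : 2 ≤ a) (hab : a ≤ b) :
    (3 ^ (-a) - 3 ^ (-b)) * (23 / 50 * (81 / 25) + 77 / 100 * (81 / 49) + 1
      + (81 / 121 + 81 / 169 + 9 / 25) * (3 / 5) ^ (a - 2)) ≤
      scaledOddTail a - scaledOddTail b := by
  set Δ : ℝ := 3 ^ (-a) - 3 ^ (-b)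
  have hterm {q p θ r : ℝ} (hq : 0 < q) (hp : 3 * q = p) (hθ₀ : 0 ≤ θ) (hθ₁ : θ ≤ 1)
      (hqθ : q * 3 ^ θ ≤ 1) (hr : r ≤ p ^ a) : θ * r * Δ ≤ q ^ a - q ^ b := by
    refine le_trans ?_ (mul_rpow_mul_sub_le_rpow_sub_rpow (by norm_num) hq hθ₀ hθ₁ hqθ hab)
    have hΔ : 0 ≤ Δ := sub_nonneg.2 (rpow_le_rpow_of_exponent_le (by norm_num) (by linarith))
    rw [hp]
    gcongr
  have h₁ : 23 / 50 * (81 / 25) * Δ ≤ (3 / 5) ^ a - (3 / 5) ^ b :=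
    hterm (p := 9 / 5) (by norm_num) (by norm_num) (by norm_num) (by norm_num)
      (by linarith [three_rpow_le_five_div_three])
      ((sq_mul_rpow_sub_two_le_rpow zero_le_one (by norm_num) ha).trans_eq' (by norm_num))
  have h₂ : 77 / 100 * (81 / 49) * Δ ≤ (3 / 7) ^ a - (3 / 7) ^ b :=
    hterm (p := 9 / 7) (by norm_num) (by norm_num) (by norm_num) (by norm_num)
      (by linarith [three_rpow_le_seven_div_three])
      ((sq_mul_rpow_sub_two_le_rpow zero_le_one (by norm_num) ha).trans_eq' (by norm_num))
  have h₃ : 1 * 1 * Δ ≤ (1 / 3) ^ a - (1 / 3) ^ b :=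
    hterm (p := 1) (by norm_num) (by norm_num) (by norm_num) le_rfl (by norm_num) (by simp)
  have h₄ : 1 * (81 / 121 * (3 / 5) ^ (a - 2)) * Δ ≤ (3 / 11) ^ a - (3 / 11) ^ b :=
    hterm (p := 9 / 11) (by norm_num) (by norm_num) (by norm_num) le_rfl (by norm_num)
      ((sq_mul_rpow_sub_two_le_rpow (c := 3 / 5) (by norm_num) (by norm_num) ha).trans_eq'
        (by norm_num))
  have h₅ : 1 * (81 / 169 * (3 / 5) ^ (a - 2)) * Δ ≤ (3 / 13) ^ a - (3 / 13) ^ b :=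
    hterm (p := 9 / 13) (by norm_num) (by norm_num) (by norm_num) le_rfl (by norm_num)
      ((sq_mul_rpow_sub_two_le_rpow (c := 3 / 5) (by norm_num) (by norm_num) ha).trans_eq'
        (by norm_num))
  have h₆ : 1 * (9 / 25 * (3 / 5) ^ (a - 2)) * Δ ≤ (1 / 5) ^ a - (1 / 5) ^ b :=
    hterm (p := 3 / 5) (by norm_num) (by norm_num) (by norm_num) le_rfl (by norm_num)
      ((sq_mul_rpow_sub_two_le_rpow (by norm_num) le_rfl ha).trans_eq' (by norm_num))
  have hsum := sum_range_le_scaledOddTail_sub (by linarith) hab 7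
  simp only [Finset.sum_range_succ, Finset.sum_range_zero] at hsum
  norm_num at hsum
  linarith

lemma rpow_neg_sub_mul_lt_scaledOddTail_sub {a b : ℝ} (ha : 2 ≤ a) (hab : a < b) :
    (3 ^ (-a) - 3 ^ (-b)) * (scaledOddTail a * scaledOddTail b) <
      scaledOddTail a - scaledOddTail b := by
  set v : ℝ := (3 / 5) ^ (a - 2)
  have hv₀ : 0 < v := by positivity
  have hv₁ : v ≤ 1 := rpow_le_one (by norm_num) (by norm_num) (by linarith)
  have hΔ : 0 < (3 : ℝ) ^ (-a) - 3 ^ (-b) :=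
    sub_pos.2 (rpow_lt_rpow_of_exponent_lt (by norm_num) (by linarith))
  have hb : 1 ≤ scaledOddTail b := one_le_scaledOddTail (by linarith)
  have hba : scaledOddTail b ≤ scaledOddTail a := by
    simpa using sum_range_le_scaledOddTail_sub (by linarith) hab.le 0
  have hprod : scaledOddTail a * scaledOddTail b < 23 / 50 * (81 / 25) + 77 / 100 * (81 / 49) + 1
      + (81 / 121 + 81 / 169 + 9 / 25) * v := by
    have hupper := scaledOddTail_le ha
    nlinarith
  calc (3 ^ (-a) - 3 ^ (-b)) * (scaledOddTail a * scaledOddTail b)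
      < (3 ^ (-a) - 3 ^ (-b)) * (23 / 50 * (81 / 25) + 77 / 100 * (81 / 49) + 1
          + (81 / 121 + 81 / 169 + 9 / 25) * v) := by gcongr
    _ ≤ scaledOddTail a - scaledOddTail b :=
        rpow_neg_sub_mul_le_scaledOddTail_sub ha hab.le

theorem h_strictAntiOn : StrictAntiOn h (Set.Ici (2 : ℝ)) := by
  intro a (ha : 2 ≤ a) b _ hab
  have hWa : 0 < scaledOddTail a := one_pos.trans_le (one_le_scaledOddTail (by linarith))
  have hWb : 0 < scaledOddTail b := one_pos.trans_le (one_le_scaledOddTail (by linarith))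
  rw [h_eq_scaledOddTail (by linarith), h_eq_scaledOddTail (by linarith),
    div_lt_div_iff₀ (by positivity) (by positivity)]
  linarith [rpow_neg_sub_mul_lt_scaledOddTail_sub ha hab]
end

section
/- Let p_1 = 3, p_2 = 5, p_3 = 7, p_4 = 11, … be the increasing enumeration of the odd prime numbers and fix a natural number m ≥ 2. The constant β' = p_m²·[1 − (8/π²)·Π_{n=1}^{m−1} p_n²/(p_n² − 1)] is best possible on the right: if c is a real number with c < p_m² such that (π^{2k}(2^{2k} − 1)/(2·(2k)!)) · |B_{2k}| < (Π_{n=1}^{m−1} p_n^{2k}/(p_n^{2k} − 1)) · p_m^{2k}/(p_m^{2k} − c) for every natural number k ≥ 1, then c ≥ β'. -/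
open Finset

/-!
Already the case `k = 1` of the hypothesis forces the bound: since `B₂ = 1/6`, its left side is
`π²/8`, and `π²/8 < P · q²/(q² - c)` rearranges to `q² (1 - 8P/π²) < c`.
-/

lemma pi_sq_mul_abs_bernoulli_two :
    Real.pi ^ 2 * ((2 : ℝ) ^ 2 - 1) / (2 * (Nat.factorial 2 : ℝ)) * |(bernoulli 2 : ℝ)| =
      Real.pi ^ 2 / 8 := by
  rw [bernoulli_two]
  norm_num [Nat.factorial]
  ring

lemma mul_one_sub_div_le_of_lt_mul_div_sub {a P Q c : ℝ} (ha : 0 < a) (hc : c < Q)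
    (h : a < P * (Q / (Q - c))) : Q * (1 - P / a) ≤ c := by
  have hQc : 0 < Q - c := sub_pos.mpr hc
  rw [mul_div_assoc', lt_div_iff₀ hQc] at h
  have key : Q * (1 - P / a) - c = (Q - c) - P * Q / a := by ring
  have hPQ : Q - c < P * Q / a := by rw [lt_div_iff₀ ha]; linarith
  linarith

theorem bernoulli_upper_bound_beta'_best_general (m : ℕ) (c : ℝ)
    (hc : c < (oddPrime (m - 1) : ℝ) ^ 2)
    (h : ∀ k : ℕ, 1 ≤ k →
      (Real.pi ^ (2 * k) * ((2 : ℝ) ^ (2 * k) - 1) / (2 * (Nat.factorial (2 * k) : ℝ))) *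
          |(bernoulli (2 * k) : ℝ)|
      < (∏ n ∈ Finset.range (m - 1),
            ((oddPrime n : ℝ) ^ (2 * k) / ((oddPrime n : ℝ) ^ (2 * k) - 1))) *
          ((oddPrime (m - 1) : ℝ) ^ (2 * k) / ((oddPrime (m - 1) : ℝ) ^ (2 * k) - c))) :
    (oddPrime (m - 1) : ℝ) ^ 2 *
        (1 - 8 / Real.pi ^ 2 *
          ∏ n ∈ Finset.range (m - 1),
            ((oddPrime n : ℝ) ^ 2 / ((oddPrime n : ℝ) ^ 2 - 1)))
      ≤ c := by
  have h₁ := h 1 le_rfl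
  simp only [mul_one, pi_sq_mul_abs_bernoulli_two] at h₁
  have hπ : 0 < Real.pi ^ 2 / 8 := by positivity
  convert mul_one_sub_div_le_of_lt_mul_div_sub hπ hc h₁ using 3
  field_simp

theorem bernoulli_upper_bound_beta'_best (m : ℕ) (hm : 2 ≤ m) (c : ℝ)
    (hc : c < (oddPrime (m - 1) : ℝ) ^ 2)
    (h : ∀ k : ℕ, 1 ≤ k →
      (Real.pi ^ (2 * k) * ((2 : ℝ) ^ (2 * k) - 1) / (2 * (Nat.factorial (2 * k) : ℝ))) *
          |(bernoulli (2 * k) : ℝ)|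
      < (∏ n ∈ Finset.range (m - 1),
            ((oddPrime n : ℝ) ^ (2 * k) / ((oddPrime n : ℝ) ^ (2 * k) - 1))) *
          ((oddPrime (m - 1) : ℝ) ^ (2 * k) / ((oddPrime (m - 1) : ℝ) ^ (2 * k) - c))) :
    (oddPrime (m - 1) : ℝ) ^ 2 *
        (1 - 8 / Real.pi ^ 2 *
          ∏ n ∈ Finset.range (m - 1),
            ((oddPrime n : ℝ) ^ 2 / ((oddPrime n : ℝ) ^ 2 - 1)))
      ≤ c :=
  bernoulli_upper_bound_beta'_best_general m c hc h
end
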